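/- Let δ > 0, c₀ > 0, C₀ > 0, and let F : [0, ∞) → [0, ∞) be nondecreasing and satisfy, for all 0 < t < s, F(t) ≤ (c₀ δ/(s−t))² F(s) + C₀((s−t)² + δ²) s²/δ. Suppose moreover F(s) ≤ M for all s. Then there is a constant C depending only on c₀, C₀ (not on δ or M) such that, provided 4c₀√δ ≤ 1 and M δ ≤ 1, F(δ) ≤ C δ³. -/

import Mathlib

/-!
Iterate the recursive inequality along `tᵢ = δ (1 + 2 c₀ i)`. Since `tᵢ₊₁ - tᵢ = 2 c₀ δ`, each step
gains the factor `(c₀ δ / (2 c₀ δ))² = 1/4` and costs `C₀ (4 c₀² + 1) δ tᵢ₊₁² ≤ K δ³ (i + 1)²`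
with `K = C₀ (4 c₀² + 1) (1 + 2 c₀)²`, so after `n` steps `F(δ) ≤ 4⁻ⁿ M + K δ³ ∑ᵢ 4⁻ⁱ (i + 1)²`. The series converges, and
as the recursive inequality holds for all `0 < t < s` the iteration can run forever, so `4⁻ⁿ M → 0`.
-/

open Finset Filter Topology

theorem le_pow_mul_add_sum_of_le_mul_succ_add {a b : ℕ → ℝ} {q : ℝ} (hq : 0 ≤ q)
    (h : ∀ i, a i ≤ q * a (i + 1) + b i) (n : ℕ) :
    a 0 ≤ q ^ n * a n + ∑ i ∈ range n, q ^ i * b i := by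
  induction n with
  | zero => simp
  | succ n ih =>
    calc a 0 ≤ q ^ n * a n + ∑ i ∈ range n, q ^ i * b i := ih
      _ ≤ q ^ n * (q * a (n + 1) + b n) + ∑ i ∈ range n, q ^ i * b i := by
        gcongr
        exact h n
      _ = q ^ (n + 1) * a (n + 1) + ∑ i ∈ range (n + 1), q ^ i * b i := by
        rw [sum_range_succ]; ring

theorem succ_sq_le_three_mul_two_pow : ∀ i : ℕ, (i + 1) ^ 2 ≤ 3 * 2 ^ i
  | 0 | 1 | 2 => by norm_num
  | i + 3 => by
    have ih := succ_sq_le_three_mul_two_pow (i + 2)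
    calc (i + 3 + 1) ^ 2 ≤ 2 * (i + 2 + 1) ^ 2 := by nlinarith [Nat.zero_le (i * i)]
      _ ≤ 3 * 2 ^ (i + 3) := by rw [pow_succ 2 (i + 2)]; linarith

theorem sum_range_quarter_pow_mul_succ_sq_le (n : ℕ) :
    ∑ i ∈ range n, (1 / 4 : ℝ) ^ i * ((i : ℝ) + 1) ^ 2 ≤ 6 := by
  have hterm (i : ℕ) : (1 / 4 : ℝ) ^ i * ((i : ℝ) + 1) ^ 2 ≤ 3 * (1 / 2 : ℝ) ^ i := by
    have h : ((i : ℝ) + 1) ^ 2 ≤ 3 * 2 ^ i := by exact_mod_cast succ_sq_le_three_mul_two_pow i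
    calc (1 / 4 : ℝ) ^ i * ((i : ℝ) + 1) ^ 2 ≤ (1 / 4 : ℝ) ^ i * (3 * 2 ^ i) := by gcongr
      _ = 3 * (1 / 2 : ℝ) ^ i := by
        rw [show (1 / 4 : ℝ) = 1 / 2 * (1 / 2) by norm_num, mul_pow, div_pow, one_pow]
        field_simp
  calc ∑ i ∈ range n, (1 / 4 : ℝ) ^ i * ((i : ℝ) + 1) ^ 2
      ≤ ∑ i ∈ range n, 3 * (1 / 2 : ℝ) ^ i := sum_le_sum fun i _ ↦ hterm i
    _ = 3 * ∑ i ∈ range n, (1 / 2 : ℝ) ^ i := by rw [mul_sum]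
    _ ≤ 3 * 2 := by gcongr; exact sum_geometric_two_le n
    _ = 6 := by norm_num

theorem le_of_forall_le_pow_mul_add {x q M c : ℝ} (hq₀ : 0 ≤ q) (hq₁ : q < 1)
    (h : ∀ n : ℕ, x ≤ q ^ n * M + c) : x ≤ c := by
  have hlim : Tendsto (fun n : ℕ ↦ q ^ n * M + c) atTop (𝓝 (0 * M + c)) :=
    ((tendsto_pow_atTop_nhds_zero_of_lt_one hq₀ hq₁).mul_const M).add_const c
  rw [zero_mul, zero_add] at hlim
  exact ge_of_tendsto' hlim h

theorem le_quarter_mul_next_add_of_recursive_bound {c₀ C₀ δ : ℝ} {F : ℝ → ℝ}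
    (hc₀ : 0 < c₀) (hC₀ : 0 ≤ C₀) (hδ : 0 < δ)
    (hF : ∀ t s : ℝ, 0 < t → t < s →
      F t ≤ (c₀ * δ / (s - t)) ^ 2 * F s + C₀ * ((s - t) ^ 2 + δ ^ 2) * s ^ 2 / δ) (i : ℕ) :
    F (δ * (1 + 2 * c₀ * i)) ≤ 1 / 4 * F (δ * (1 + 2 * c₀ * (i + 1 : ℕ)))
      + C₀ * (4 * c₀ ^ 2 + 1) * (1 + 2 * c₀) ^ 2 * δ ^ 3 * ((i : ℝ) + 1) ^ 2 := by
  set t := δ * (1 + 2 * c₀ * i)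
  set s := δ * (1 + 2 * c₀ * (i + 1 : ℕ))
  have hgap : s - t = 2 * c₀ * δ := by simp only [s, t]; push_cast; ring
  have hratio : (c₀ * δ / (s - t)) ^ 2 = 1 / 4 := by
    rw [hgap]; field_simp; norm_num
  have hs : s ≤ (1 + 2 * c₀) * ((i : ℝ) + 1) * δ := by
    simp only [s]; push_cast; nlinarith [(Nat.cast_nonneg i : (0 : ℝ) ≤ i)]
  have hcost : C₀ * ((s - t) ^ 2 + δ ^ 2) * s ^ 2 / δ
      ≤ C₀ * (4 * c₀ ^ 2 + 1) * (1 + 2 * c₀) ^ 2 * δ ^ 3 * ((i : ℝ) + 1) ^ 2 := by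
    have hs₀ : 0 ≤ s := by positivity
    calc C₀ * ((s - t) ^ 2 + δ ^ 2) * s ^ 2 / δ = C₀ * (4 * c₀ ^ 2 + 1) * δ * s ^ 2 := by
          rw [hgap]; field_simp; ring
      _ ≤ C₀ * (4 * c₀ ^ 2 + 1) * δ * ((1 + 2 * c₀) * ((i : ℝ) + 1) * δ) ^ 2 := by gcongr
      _ = _ := by ring
  have hts : t < s := by linarith [hgap, mul_pos hc₀ hδ]
  calc F t ≤ (c₀ * δ / (s - t)) ^ 2 * F s + C₀ * ((s - t) ^ 2 + δ ^ 2) * s ^ 2 / δ :=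
        hF t s (by positivity) hts
    _ ≤ _ := by rw [hratio]; gcongr

/-- Abstract iteration lemma: if a nonnegative nondecreasing `F` satisfies
`F(t) ≤ (c₀δ/(s−t))² F(s) + C₀((s−t)² + δ²) s²/δ` for all `0 < t < s` and is globally
bounded by `M`, then (with `C = C(c₀, C₀)`), provided `4c₀√δ ≤ 1` and `Mδ ≤ 1`,
one has `F(δ) ≤ C δ³`. -/
theorem stmt_8 (c₀ C₀ : ℝ) (hc₀ : 0 < c₀) (hC₀ : 0 < C₀) :
    ∃ C > 0, ∀ (δ M : ℝ) (F : ℝ → ℝ), 0 < δ →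
      (∀ t, 0 ≤ F t) →
      MonotoneOn F (Set.Ici (0 : ℝ)) →
      (∀ t s : ℝ, 0 < t → t < s →
        F t ≤ (c₀ * δ / (s - t)) ^ 2 * F s + C₀ * ((s - t) ^ 2 + δ ^ 2) * s ^ 2 / δ) →
      (∀ s, F s ≤ M) →
      4 * c₀ * Real.sqrt δ ≤ 1 → M * δ ≤ 1 →
      F δ ≤ C * δ ^ 3 := by
  set K := C₀ * (4 * c₀ ^ 2 + 1) * (1 + 2 * c₀) ^ 2
  refine ⟨6 * K, by positivity, fun δ M F hδ _ _ hF hFM _ _ ↦ ?_⟩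
  refine le_of_forall_le_pow_mul_add (q := 1 / 4) (M := M) (by norm_num) (by norm_num) fun n ↦ ?_
  have hiter := le_pow_mul_add_sum_of_le_mul_succ_add (a := fun i : ℕ ↦ F (δ * (1 + 2 * c₀ * i)))
    (by norm_num) (le_quarter_mul_next_add_of_recursive_bound hc₀ hC₀.le hδ hF) n
  simp only [Nat.cast_zero, mul_zero, add_zero, mul_one] at hiter
  calc F δ ≤ (1 / 4) ^ n * F (δ * (1 + 2 * c₀ * n))
        + K * δ ^ 3 * ∑ i ∈ range n, (1 / 4 : ℝ) ^ i * ((i : ℝ) + 1) ^ 2 := by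
        rw [mul_sum]; convert hiter using 3; ring
    _ ≤ (1 / 4) ^ n * M + K * δ ^ 3 * 6 := by
        gcongr
        · exact hFM _
        · exact sum_range_quarter_pow_mul_succ_sq_le n
    _ = (1 / 4) ^ n * M + 6 * K * δ ^ 3 := by ring
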